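/- If F ∈ P satisfies M^k F = F for some k > 0, then for every p ≥ 0 each coefficient (a rational function of w) of the power series log(M^p F)(w,q) ∈ Q(w)[[q]] is O(w) as w → ∞, i.e. has degree at most 1 (numerator degree minus denominator degree ≤ 1). Moreover, the residue at w = 0 of log(M^p F)(w^{−1}, q) (taken coefficient-wise in q) is independent of p. -/

import Mathlib

open PowerSeries Polynomial

noncomputable section

/-- evaluation at `w = 0`, coefficientwise in `q`: `F(w,q) ↦ F(0,q)`. -/
def ev0 (F : PowerSeries (RatFunc ℚ)) : PowerSeries ℚ :=
  PowerSeries.mk fun d => RatFunc.eval (RingHom.id ℚ) 0 (PowerSeries.coeff d F)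

/-- the operator `M F = {1 + (q/w) d/dq}(F/F(0,q))`. -/
def Mop (F : PowerSeries (RatFunc ℚ)) : PowerSeries (RatFunc ℚ) :=
  PowerSeries.mk fun d =>
    (RatFunc.X + (d : RatFunc ℚ)) / RatFunc.X *
      PowerSeries.coeff d
        (F * PowerSeries.map (algebraMap ℚ (RatFunc ℚ)) (ev0 F)⁻¹)

/-- formal logarithm in `q` of a power series with constant term `1`. -/
def logPS (F : PowerSeries (RatFunc ℚ)) : PowerSeries (RatFunc ℚ) :=
  PowerSeries.mk fun d =>
    if d = 0 then 0
    else ∑ m ∈ Finset.Icc 1 d,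
      ((-1 : RatFunc ℚ) ^ (m + 1) / (m : RatFunc ℚ)) *
        PowerSeries.coeff d ((F - 1) ^ m)

/-- substitution `w ↦ w⁻¹` in a rational function. -/
def invSubst (f : RatFunc ℚ) : RatFunc ℚ :=
  RatFunc.eval (algebraMap ℚ (RatFunc ℚ)) RatFunc.X⁻¹ f

/-- the residue at `w = 0` of a rational function: the coefficient of `w^{-1}` in its
Laurent expansion at `0`. -/
def res0 (f : RatFunc ℚ) : ℚ := ((f : LaurentSeries ℚ)).coeff (-1)

end

/-!
Write `u_{p,d}` for the expansion at `w = ∞` of the `q^d`-coefficient of `log (M^p F)`. Since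
`M G = (G / G(0,q)) · (1 + (q/w) d/dq log (G / G(0,q)))`, the logarithm of `M G` is
`log G - log G(0,q) + log (1 + (q/w) d/dq log (G / G(0,q)))`. By induction on `d` the lower
coefficients are `O(w)`, so in the last logarithm only its linear term contributes to the
`q^d`-coefficient beyond `O(1)`, and `u_{p+1,d} ≡ (1 + d/w) u_{p,d}` modulo `O(1)`.
If every `u_{p,d}` were `O(w^N)` with `N ≥ 2`, the `w^N`-coefficient would then be constant in `p`
and the `w^{N-1}`-coefficient would grow by `d` times it at every step, which periodicity
`M^k F = F` forbids; hence `u_{p,d} = O(w)`. The same congruence then shows that the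
`w`-coefficient of `u_{p,d}`, which is the residue of `log (M^p F)(w⁻¹, q)` at `w = 0`, does
not depend on `p`.
-/

theorem HahnSeries.orderTop_C_nonneg {Γ R : Type*} [AddCommMonoid Γ] [PartialOrder Γ]
    [IsOrderedCancelAddMonoid Γ] [NonAssocSemiring R] (r : R) :
    0 ≤ (HahnSeries.C r : HahnSeries Γ R).orderTop := by
  rw [HahnSeries.C_apply]
  exact HahnSeries.orderTop_single_le

namespace PowerSeries

section Log

variable {A : Type*} [CommRing A]

theorem coeff_pow_of_lt {Y : A⟦X⟧} (hY : constantCoeff Y = 0) {e m : ℕ} (h : e < m) :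
    coeff e (Y ^ m) = 0 :=
  coeff_of_lt_order e ((Nat.cast_lt.mpr h).trans_le (le_order_pow_of_constantCoeff_eq_zero m hY))

theorem constantCoeff_one_add_C_mul_X_mul (c : A) (f : A⟦X⟧) :
    constantCoeff (1 + C c * (X * f)) = 1 := by
  simp

variable [Algebra ℚ A]

theorem coeff_logOf {f : A⟦X⟧} (hf : constantCoeff f = 1) (e : ℕ) :
    coeff e (logOf f) =
      ∑ m ∈ Finset.Icc 1 e, algebraMap ℚ A ((-1) ^ (m + 1) / m) * coeff e ((f - 1) ^ m) := by
  have hY : constantCoeff (f - 1) = 0 := by simp [hf]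
  rw [logOf_eq, coeff_subst' (HasSubst.of_constantCoeff_zero' hY),
    finsum_eq_sum_of_support_subset _ (s := Finset.Icc 1 e)]
  · refine Finset.sum_congr rfl fun m hm => ?_
    rw [coeff_log, if_neg (by grind), Algebra.smul_def, Algebra.algebraMap_self, RingHom.id_apply]
  · intro m hm
    contrapose! hm
    rcases Nat.eq_zero_or_pos m with rfl | hm0
    · simp
    · simp [coeff_pow_of_lt hY (by grind : e < m)]

theorem map_logOf {B : Type*} [CommRing B] [Algebra ℚ B] (ρ : A →+* B) {f : A⟦X⟧}
    (hf : constantCoeff f = 1) : map ρ (logOf f) = logOf (map ρ f) := by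
  have hY : constantCoeff (f - 1) = 0 := by simp [hf]
  rw [logOf_eq, logOf_eq, ← map_log ρ, ← map_one (map ρ), ← map_sub]
  exact map_subst (HasSubst.of_constantCoeff_zero' hY) (log A)

theorem one_add_X_mul_derivative_log : (1 + X) * d⁄dX A (log A) = 1 := by
  ext n
  rcases n with _ | n
  · simp [deriv_log]
  · rw [add_mul, one_mul, map_add, coeff_succ_X_mul, deriv_log, coeff_mk, coeff_mk, coeff_one,
      if_neg n.succ_ne_zero, pow_succ, map_mul, map_neg, map_one]
    ring

theorem mul_derivative_logOf {f : A⟦X⟧} (hf : constantCoeff f = 1) :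
    f * d⁄dX A (logOf f) = d⁄dX A f := by
  have hY : HasSubst (f - 1) := HasSubst.of_constantCoeff_zero' (by simp [hf])
  have hsubst : f * (d⁄dX A (log A)).subst (f - 1) = 1 := by
    have h := congrArg (substAlgHom hY) (one_add_X_mul_derivative_log (A := A))
    rwa [map_mul, map_add, map_one, substAlgHom_X, add_sub_cancel, coe_substAlgHom] at h
  rw [logOf_eq, derivative_subst hY, ← mul_assoc, hsubst, one_mul, map_sub,
    Derivation.map_one_eq_zero, sub_zero]

theorem logOf_mul {f g : A⟦X⟧} (hf : constantCoeff f = 1) (hg : constantCoeff g = 1) :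
    logOf (f * g) = logOf f + logOf g := by
  have := IsAddTorsionFree.of_module_rat A
  have hfg : constantCoeff (f * g) = 1 := by rw [map_mul, hf, hg, one_mul]
  refine derivative.ext ?_ (by rw [map_add, constantCoeff_logOf hf, constantCoeff_logOf hg,
    constantCoeff_logOf hfg, add_zero])
  refine (isUnit_iff_constantCoeff.mpr (hfg ▸ isUnit_one)).mul_left_cancel ?_
  rw [mul_derivative_logOf hfg, Derivation.leibniz, map_add, smul_eq_mul, smul_eq_mul]
  linear_combination (-g) * mul_derivative_logOf hf - f * mul_derivative_logOf hg

end Log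

section EulerDerivative

variable {R S : Type*} [CommRing R] [CommRing S]

theorem coeff_X_mul_derivative (f : R⟦X⟧) (n : ℕ) :
    coeff n (X * d⁄dX R f) = n * coeff n f := by
  rcases n with _ | n
  · simp
  · rw [coeff_succ_X_mul, coeff_derivative, mul_comm, Nat.cast_succ]

theorem map_X_mul_derivative (ρ : R →+* S) (f : R⟦X⟧) :
    map ρ (X * d⁄dX R f) = X * d⁄dX S (map ρ f) := by
  ext n
  rw [coeff_map, coeff_X_mul_derivative, coeff_X_mul_derivative, coeff_map, map_mul, map_natCast]

end EulerDerivative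

section Valuation

variable {A Γ₀ : Type*} [CommRing A] [LinearOrderedAddCommMonoidWithTop Γ₀]
  (v : AddValuation A Γ₀) {Y : A⟦X⟧} {d : ℕ}

theorem addValuation_coeff_pow_nonneg_of_lt (hY : ∀ e < d, 0 ≤ v (coeff e Y)) (m : ℕ) :
    ∀ e < d, 0 ≤ v (coeff e (Y ^ m)) := by
  induction m with
  | zero =>
    intro e _
    rw [pow_zero, coeff_one]
    split_ifs <;> simp
  | succ m ih =>
    intro e he
    rw [pow_succ, coeff_mul]
    refine AddValuation.map_le_sum v fun ij hij => ?_
    rw [Finset.HasAntidiagonal.mem_antidiagonal] at hij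
    rw [AddValuation.map_mul]
    exact add_nonneg (ih _ (by omega)) (hY _ (by omega))

theorem addValuation_coeff_pow_nonneg (hY0 : constantCoeff Y = 0)
    (hY : ∀ e < d, 0 ≤ v (coeff e Y)) {m : ℕ} (hm : 2 ≤ m) : 0 ≤ v (coeff d (Y ^ m)) := by
  obtain ⟨m, rfl⟩ : ∃ n, m = n + 1 + 1 := ⟨m - 2, by omega⟩
  rw [pow_succ, coeff_mul]
  refine AddValuation.map_le_sum v fun ij hij => ?_
  rw [Finset.HasAntidiagonal.mem_antidiagonal] at hij
  rcases Nat.eq_zero_or_pos ij.2 with h2 | h2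
  · simp [h2, hY0]
  rcases Nat.eq_zero_or_pos ij.1 with h1 | h1
  · simp [h1, coeff_pow_of_lt hY0 (Nat.succ_pos m)]
  rw [AddValuation.map_mul]
  exact add_nonneg (addValuation_coeff_pow_nonneg_of_lt v hY _ _ (by omega)) (hY _ (by omega))

theorem addValuation_coeff_logOf_one_add_sub_nonneg [Algebra ℚ A]
    (hv : ∀ q : ℚ, 0 ≤ v (algebraMap ℚ A q)) (hY0 : constantCoeff Y = 0)
    (hY : ∀ e < d, 0 ≤ v (coeff e Y)) : 0 ≤ v (coeff d (logOf (1 + Y)) - coeff d Y) := by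
  have h1 : constantCoeff (1 + Y) = 1 := by rw [map_add, hY0, map_one, add_zero]
  rw [coeff_logOf h1, add_sub_cancel_left]
  rcases Nat.eq_zero_or_pos d with rfl | hd
  · simp [hY0]
  rw [← Finset.add_sum_erase _ _ (Finset.mem_Icc.mpr ⟨le_rfl, hd⟩)]
  norm_num only [map_one, one_mul, pow_one, add_sub_cancel_left]
  refine AddValuation.map_le_sum v fun m hm => ?_
  simp only [Finset.mem_erase, Finset.mem_Icc] at hm
  rw [AddValuation.map_mul]
  exact add_nonneg (hv _) (addValuation_coeff_pow_nonneg v hY0 hY (by omega))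

end Valuation

theorem orderTop_coeff_logOf_sub_nonneg {K : Type*} [Field K] [CharZero K]
    {W : (LaurentSeries K)⟦X⟧} {d : ℕ} (hW : ∀ e < d, -1 ≤ (coeff e W).orderTop) :
    0 ≤ (coeff d (logOf (1 + C (HahnSeries.single 1 1) * (X * d⁄dX _ W))) -
      HahnSeries.single 1 (d : K) * coeff d W).orderTop := by
  set Y := C (HahnSeries.single 1 1) * (X * d⁄dX _ W)
  have hY : ∀ e, coeff e Y = HahnSeries.single 1 (e : K) * coeff e W := fun e => by
    rw [coeff_C_mul, coeff_X_mul_derivative, ← mul_assoc, ← map_natCast HahnSeries.C,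
      HahnSeries.C_apply, HahnSeries.single_mul_single, one_mul, add_zero]
  rw [← hY, ← HahnSeries.addVal_apply]
  refine addValuation_coeff_logOf_one_add_sub_nonneg _ (fun q => ?_) (by simp [Y]) fun e he => ?_
  · rw [HahnSeries.addVal_apply, eq_ratCast, ← map_ratCast HahnSeries.C]
    exact HahnSeries.orderTop_C_nonneg _
  · rw [HahnSeries.addVal_apply, hY, HahnSeries.orderTop_mul]
    calc (0 : WithTop ℤ) = 1 + -1 := rfl
      _ ≤ _ := add_le_add HahnSeries.orderTop_single_le (hW e he)

end PowerSeries

namespace LaurentSeries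

open HahnSeries

theorem coeff_eq_of_orderTop_sub_nonneg {R : Type*} [Ring R] {x y : LaurentSeries R} {c : R}
    (h : 0 ≤ (y - x - single 1 c * x).orderTop) {n : ℤ} (hn : n < 0) :
    y.coeff n = x.coeff n + c * x.coeff (n - 1) := by
  have h0 := coeff_eq_zero_of_lt_orderTop ((WithTop.coe_lt_coe.mpr hn).trans_le h)
  rwa [HahnSeries.coeff_sub, HahnSeries.coeff_sub, ← sub_add_cancel n 1, coeff_single_mul_add,
    sub_add_cancel, sub_sub, sub_eq_zero] at h0

theorem exists_le_orderTop {R : Type*} [Zero R] (x : LaurentSeries R) :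
    ∃ N : ℕ, ((-N : ℤ) : WithTop ℤ) ≤ x.orderTop := by
  rcases eq_or_ne x 0 with rfl | hx
  · exact ⟨0, by simp⟩
  · refine ⟨(-x.order).toNat, ?_⟩
    rw [← order_eq_orderTop_of_ne_zero hx, WithTop.coe_le_coe]
    omega

theorem neg_one_le_orderTop_of_periodic {K : Type*} [Field K] [CharZero K]
    {u : ℕ → LaurentSeries K} {k : ℕ} (hk : 0 < k) (hu : Function.Periodic u k) {c : K}
    (hc : c ≠ 0) (hrec : ∀ p, 0 ≤ (u (p + 1) - u p - single 1 c * u p).orderTop) (p : ℕ) :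
    -1 ≤ (u p).orderTop := by
  have hcoeff := fun p n (hn : n < 0) => coeff_eq_of_orderTop_sub_nonneg (hrec p) hn
  -- The coefficient at `-N - 2` is constant in `p`, and the one at `-N - 1` grows by `c` times
  -- it at each step, so periodicity kills the former.
  have step : ∀ N : ℤ, 0 ≤ N → (∀ p, ((-N - 2 : ℤ) : WithTop ℤ) ≤ (u p).orderTop) →
      ∀ p, ((-N - 1 : ℤ) : WithTop ℤ) ≤ (u p).orderTop := by
    intro N hN0 hN
    have hconst : ∀ p, (u p).coeff (-N - 2) = (u 0).coeff (-N - 2) := by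
      intro p
      induction p with
      | zero => rfl
      | succ p ih =>
        rw [hcoeff p _ (by omega), coeff_eq_zero_of_lt_orderTop (i := -N - 2 - 1)
          (lt_of_lt_of_le ?_ (hN p)), mul_zero, add_zero, ih]
        exact_mod_cast (by omega : -N - 2 - 1 < -N - 2)
    have hlin : ∀ i : ℕ, (u i).coeff (-N - 1) =
        (u 0).coeff (-N - 1) + i * c * (u 0).coeff (-N - 2) := by
      intro i
      induction i with
      | zero => simp
      | succ i ih =>
        rw [hcoeff i _ (by omega), ih, show -N - 1 - 1 = -N - 2 by ring, hconst i]
        push_cast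
        ring
    have hzero : (u 0).coeff (-N - 2) = 0 := by
      have h := hlin k
      rw [hu.eq, left_eq_add, mul_assoc, mul_eq_zero, mul_eq_zero] at h
      exact (h.resolve_left (Nat.cast_ne_zero.mpr hk.ne')).resolve_left hc
    intro p
    refine le_orderTop_iff_forall.mpr fun j hj => ?_
    have hj : j < -N - 1 := by exact_mod_cast hj
    rcases eq_or_lt_of_le (show j ≤ -N - 2 by omega) with rfl | hlt
    · rw [hconst, hzero]
    · exact coeff_eq_zero_of_lt_orderTop (lt_of_lt_of_le (by exact_mod_cast hlt) (hN p))
  have descend : ∀ m : ℕ, (∀ p, ((-m - 1 : ℤ) : WithTop ℤ) ≤ (u p).orderTop) →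
      -1 ≤ (u p).orderTop := by
    intro m
    induction m with
    | zero => intro h; simpa using h p
    | succ m ih =>
      intro h
      exact ih (step m (by omega) fun p => (le_of_eq (congrArg _ (by push_cast; ring))).trans (h p))
  choose N hN using fun p => exists_le_orderTop (u p)
  refine descend ((Finset.range k).sup N) fun p => ?_
  rw [← hu.map_mod_nat p]
  refine le_trans ?_ (hN (p % k))
  have := Finset.le_sup (f := N) (Finset.mem_range.mpr (Nat.mod_lt p hk))
  exact_mod_cast (by omega : -(((Finset.range k).sup N : ℕ) : ℤ) - 1 ≤ -(N (p % k) : ℤ))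

end LaurentSeries

namespace Polynomial

variable {K : Type*} [Field K]

/-- `p(1/t) ∈ K((t))`: the expansion at `w = ∞` in the parameter `t = 1/w`, so that being
`O(w^N)` at infinity becomes `-N ≤ orderTop`. -/
noncomputable def laurentAtInfty : K[X] →+* LaurentSeries K :=
  eval₂RingHom HahnSeries.C (HahnSeries.single (-1) 1)

theorem laurentAtInfty_monomial (n : ℕ) (a : K) :
    laurentAtInfty (monomial n a) = HahnSeries.single (-n : ℤ) a := by
  simp [laurentAtInfty, HahnSeries.single_pow, HahnSeries.C_apply, HahnSeries.single_mul_single]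

theorem coeff_laurentAtInfty_neg (p : K[X]) (n : ℕ) :
    (laurentAtInfty p).coeff (-n : ℤ) = p.coeff n := by
  induction p using Polynomial.induction_on' with
  | add p q hp hq => simp [hp, hq]
  | monomial m a =>
    rw [laurentAtInfty_monomial, coeff_monomial, HahnSeries.coeff_single]
    simp [eq_comm]

theorem orderTop_laurentAtInfty {p : K[X]} (hp : p ≠ 0) :
    (laurentAtInfty p).orderTop = ((-p.natDegree : ℤ) : WithTop ℤ) := by
  refine le_antisymm (HahnSeries.orderTop_le_of_coeff_ne_zero ?_)
    (HahnSeries.le_orderTop_iff_forall.mpr fun j hj => ?_)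
  · rwa [coeff_laurentAtInfty_neg, ← leadingCoeff, leadingCoeff_ne_zero]
  · have hj' : j < -(p.natDegree : ℤ) := by exact_mod_cast hj
    obtain ⟨n, rfl⟩ : ∃ n : ℕ, j = -n := ⟨(-j).toNat, by omega⟩
    rw [coeff_laurentAtInfty_neg]
    exact coeff_eq_zero_of_natDegree_lt (by omega)

theorem laurentAtInfty_ne_zero {p : K[X]} (hp : p ≠ 0) : laurentAtInfty p ≠ 0 := by
  rw [← HahnSeries.orderTop_ne_top, orderTop_laurentAtInfty hp]
  exact WithTop.coe_ne_top

end Polynomial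

namespace RatFunc

variable {K : Type*} [Field K]

open scoped nonZeroDivisors in
noncomputable def laurentAtInfty : RatFunc K →+* LaurentSeries K :=
  liftRingHom Polynomial.laurentAtInfty fun _ hp =>
    mem_nonZeroDivisors_of_ne_zero (Polynomial.laurentAtInfty_ne_zero (nonZeroDivisors.ne_zero hp))

theorem laurentAtInfty_apply (f : RatFunc K) :
    laurentAtInfty f = f.num.laurentAtInfty / f.denom.laurentAtInfty := by
  conv_lhs => rw [← num_div_denom f]
  exact liftRingHom_apply_div _ _ _ _

theorem laurentAtInfty_X_inv : laurentAtInfty (X⁻¹ : RatFunc K) = HahnSeries.single 1 1 := by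
  rw [map_inv₀, laurentAtInfty_apply]
  simp [Polynomial.laurentAtInfty]

theorem orderTop_laurentAtInfty {f : RatFunc K} (hf : f ≠ 0) :
    (laurentAtInfty f).orderTop = ((-f.intDegree : ℤ) : WithTop ℤ) := by
  have hd := Polynomial.laurentAtInfty_ne_zero f.denom_ne_zero
  have h := congrArg HahnSeries.orderTop (div_mul_cancel₀ f.num.laurentAtInfty hd)
  rw [← laurentAtInfty_apply, HahnSeries.orderTop_mul,
    Polynomial.orderTop_laurentAtInfty f.denom_ne_zero,
    Polynomial.orderTop_laurentAtInfty (num_ne_zero hf)] at h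
  obtain ⟨o, ho⟩ := WithTop.ne_top_iff_exists.mp
    (HahnSeries.orderTop_ne_top.mpr ((_root_.map_ne_zero laurentAtInfty).mpr hf))
  rw [← ho] at h ⊢
  norm_cast at h ⊢
  rw [intDegree]
  omega

theorem natDegree_num_le_of_le_orderTop {f : RatFunc K} {N : ℕ}
    (h : ((-N : ℤ) : WithTop ℤ) ≤ (laurentAtInfty f).orderTop) :
    f.num.natDegree ≤ f.denom.natDegree + N := by
  rcases eq_or_ne f 0 with rfl | hf
  · simp
  rw [orderTop_laurentAtInfty hf, WithTop.coe_le_coe, intDegree] at h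
  omega

end RatFunc

/- `algebraMap ℚ (RatFunc ℚ)` in `Mop` and `invSubst` is `DivisionRing.toRatAlgebra`, not the
algebra structure of `RatFunc K` at `K = ℚ`, so lemmas about the latter do not apply to it;
`RingHom.ext_rat` identifies the two. -/

theorem laurentAtInfty_algebraMap_rat (c : ℚ) :
    RatFunc.laurentAtInfty (algebraMap ℚ (RatFunc ℚ) c) = HahnSeries.C c := by
  rw [← RingHom.comp_apply,
    RingHom.ext_rat (RingHom.comp _ _) (HahnSeries.C : ℚ →+* LaurentSeries ℚ)]

theorem coe_invSubst (f : RatFunc ℚ) :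
    ((invSubst f : RatFunc ℚ) : LaurentSeries ℚ) = RatFunc.laurentAtInfty f := by
  have hX : ((RatFunc.X⁻¹ : RatFunc ℚ) : LaurentSeries ℚ) = HahnSeries.single (-1) 1 := by
    rw [map_inv₀, RatFunc.coe_X, HahnSeries.inv_single, inv_one]
  rw [invSubst, RatFunc.eval, map_div₀, Polynomial.hom_eval₂, Polynomial.hom_eval₂, hX,
    RingHom.ext_rat (RingHom.comp _ _) (HahnSeries.C : ℚ →+* LaurentSeries ℚ),
    RatFunc.laurentAtInfty_apply]
  rfl

noncomputable def divEv0 (G : PowerSeries (RatFunc ℚ)) : PowerSeries (RatFunc ℚ) :=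
  G * PowerSeries.map (algebraMap ℚ (RatFunc ℚ)) (ev0 G)⁻¹

section Mop

variable {G : PowerSeries (RatFunc ℚ)}

theorem constantCoeff_ev0 (hG : constantCoeff G = 1) : constantCoeff (ev0 G) = 1 := by
  rw [← coeff_zero_eq_constantCoeff_apply, ev0, coeff_mk, coeff_zero_eq_constantCoeff_apply, hG]
  exact RatFunc.eval_one _ _

theorem constantCoeff_inv_ev0 (hG : constantCoeff G = 1) : constantCoeff (ev0 G)⁻¹ = 1 := by
  rw [constantCoeff_inv, constantCoeff_ev0 hG, inv_one]

theorem constantCoeff_divEv0 (hG : constantCoeff G = 1) : constantCoeff (divEv0 G) = 1 := by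
  rw [divEv0, map_mul, hG, one_mul, ← coeff_zero_eq_constantCoeff_apply, PowerSeries.coeff_map,
    coeff_zero_eq_constantCoeff_apply, constantCoeff_inv_ev0 hG, map_one]

theorem Mop_eq_add (G : PowerSeries (RatFunc ℚ)) :
    Mop G = divEv0 G + PowerSeries.C RatFunc.X⁻¹ * (PowerSeries.X * d⁄dX _ (divEv0 G)) := by
  ext d
  rw [Mop, coeff_mk, map_add, PowerSeries.coeff_C_mul, coeff_X_mul_derivative, ← divEv0]
  have hX : (RatFunc.X : RatFunc ℚ) ≠ 0 := RatFunc.X_ne_zero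
  field_simp

theorem Mop_eq_mul (hG : constantCoeff G = 1) :
    Mop G = divEv0 G *
      (1 + PowerSeries.C RatFunc.X⁻¹ * (PowerSeries.X * d⁄dX _ (logOf (divEv0 G)))) := by
  rw [Mop_eq_add]
  linear_combination (-(PowerSeries.C RatFunc.X⁻¹ * PowerSeries.X)) *
    mul_derivative_logOf (constantCoeff_divEv0 hG)

theorem constantCoeff_Mop (hG : constantCoeff G = 1) : constantCoeff (Mop G) = 1 := by
  rw [Mop_eq_mul hG, map_mul, constantCoeff_divEv0 hG, constantCoeff_one_add_C_mul_X_mul, one_mul]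

theorem constantCoeff_iterate_Mop (hG : constantCoeff G = 1) (p : ℕ) :
    constantCoeff (Mop^[p] G) = 1 := by
  induction p with
  | zero => exact hG
  | succ p ih => rw [Function.iterate_succ_apply']; exact constantCoeff_Mop ih

theorem logOf_divEv0 (hG : constantCoeff G = 1) :
    logOf (divEv0 G) = logOf G + map (algebraMap ℚ (RatFunc ℚ)) (logOf (ev0 G)⁻¹) := by
  have hinv := constantCoeff_inv_ev0 hG
  rw [divEv0, logOf_mul hG, map_logOf _ hinv]
  rw [← coeff_zero_eq_constantCoeff_apply, PowerSeries.coeff_map,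
    coeff_zero_eq_constantCoeff_apply, hinv, map_one]

theorem logOf_Mop (hG : constantCoeff G = 1) :
    logOf (Mop G) = logOf (divEv0 G) +
      logOf (1 + PowerSeries.C RatFunc.X⁻¹ * (PowerSeries.X * d⁄dX _ (logOf (divEv0 G)))) := by
  rw [Mop_eq_mul hG, logOf_mul (constantCoeff_divEv0 hG) (constantCoeff_one_add_C_mul_X_mul _ _)]

theorem laurentAtInfty_coeff_logOf_divEv0 (hG : constantCoeff G = 1) (e : ℕ) :
    RatFunc.laurentAtInfty (PowerSeries.coeff e (logOf (divEv0 G))) =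
      RatFunc.laurentAtInfty (PowerSeries.coeff e (logOf G)) +
        HahnSeries.C (PowerSeries.coeff e (logOf (ev0 G)⁻¹)) := by
  rw [logOf_divEv0 hG, map_add, PowerSeries.coeff_map, map_add, laurentAtInfty_algebraMap_rat]

theorem laurentAtInfty_coeff_logOf_Mop (hG : constantCoeff G = 1) (d : ℕ) :
    RatFunc.laurentAtInfty (PowerSeries.coeff d (logOf (Mop G))) =
      PowerSeries.coeff d (map RatFunc.laurentAtInfty (logOf (divEv0 G))) +
      PowerSeries.coeff d (logOf (1 + PowerSeries.C (HahnSeries.single 1 1) *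
        (PowerSeries.X * d⁄dX _ (map RatFunc.laurentAtInfty (logOf (divEv0 G)))))) := by
  rw [logOf_Mop hG, map_add, map_add, ← PowerSeries.coeff_map, ← PowerSeries.coeff_map,
    map_logOf _ (constantCoeff_one_add_C_mul_X_mul _ _), map_add, map_one, map_mul,
    PowerSeries.map_C, RatFunc.laurentAtInfty_X_inv, map_X_mul_derivative]

end Mop

theorem logPS_eq_logOf {F : PowerSeries (RatFunc ℚ)} (hF : constantCoeff F = 1) :
    logPS F = logOf F := by
  ext d
  rw [logPS, coeff_mk, coeff_logOf hF]
  split_ifs with hd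
  · simp [hd]
  · refine Finset.sum_congr rfl fun m _ => ?_
    simp

noncomputable def logCoeffAtInfty (F : PowerSeries (RatFunc ℚ)) (p d : ℕ) : LaurentSeries ℚ :=
  RatFunc.laurentAtInfty (PowerSeries.coeff d (logPS (Mop^[p] F)))

theorem logCoeffAtInfty_zero (F : PowerSeries (RatFunc ℚ)) (p : ℕ) :
    logCoeffAtInfty F p 0 = 0 := by
  rw [logCoeffAtInfty, logPS, coeff_mk, if_pos rfl, map_zero]

section LogCoeffAtInfty

variable {F : PowerSeries (RatFunc ℚ)}

-- `single 1 d` is `d/w`: this is the congruence `u_{p+1,d} ≡ (1 + d/w) u_{p,d}` modulo `O(1)`.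
theorem orderTop_logCoeffAtInfty_succ_sub (hF : constantCoeff F = 1) {d : ℕ}
    (hd : ∀ e < d, ∀ p, -1 ≤ (logCoeffAtInfty F p e).orderTop) (p : ℕ) :
    0 ≤ (logCoeffAtInfty F (p + 1) d - logCoeffAtInfty F p d -
      HahnSeries.single 1 (d : ℚ) * logCoeffAtInfty F p d).orderTop := by
  have hG := constantCoeff_iterate_Mop hF p
  set W := map RatFunc.laurentAtInfty (logOf (divEv0 (Mop^[p] F)))
  set c : ℕ → LaurentSeries ℚ :=
    fun e => HahnSeries.C (PowerSeries.coeff e (logOf (ev0 (Mop^[p] F))⁻¹))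
  have hc : ∀ e, 0 ≤ (c e).orderTop := fun e => HahnSeries.orderTop_C_nonneg _
  have hW : ∀ e, PowerSeries.coeff e W = logCoeffAtInfty F p e + c e := fun e => by
    rw [PowerSeries.coeff_map, laurentAtInfty_coeff_logOf_divEv0 hG, logCoeffAtInfty,
      logPS_eq_logOf hG]
  have hlog := PowerSeries.orderTop_coeff_logOf_sub_nonneg (W := W) (d := d) fun e he => by
    rw [hW, ← HahnSeries.addVal_apply]
    exact AddValuation.map_le_add _ (by rw [HahnSeries.addVal_apply]; exact hd e he p)
      (by rw [HahnSeries.addVal_apply]; exact le_trans (by decide) (hc e))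
  have hsingle : 0 ≤ (HahnSeries.single 1 (d : ℚ) * c d).orderTop := by
    rw [HahnSeries.orderTop_mul]
    exact add_nonneg (le_trans zero_le_one HahnSeries.orderTop_single_le) (hc d)
  have hsplit : logCoeffAtInfty F (p + 1) d - logCoeffAtInfty F p d -
      HahnSeries.single 1 (d : ℚ) * logCoeffAtInfty F p d =
      c d + (PowerSeries.coeff d (logOf (1 + PowerSeries.C (HahnSeries.single 1 1) *
        (PowerSeries.X * d⁄dX _ W))) - HahnSeries.single 1 (d : ℚ) * PowerSeries.coeff d W) +
      HahnSeries.single 1 (d : ℚ) * c d := by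
    rw [logCoeffAtInfty, Function.iterate_succ_apply', logPS_eq_logOf (constantCoeff_Mop hG),
      laurentAtInfty_coeff_logOf_Mop hG, hW]
    ring
  rw [hsplit, ← HahnSeries.addVal_apply]
  refine AddValuation.map_le_add _ (AddValuation.map_le_add _ ?_ ?_) ?_ <;>
    rw [HahnSeries.addVal_apply]
  exacts [hc d, hlog, hsingle]

theorem neg_one_le_orderTop_logCoeffAtInfty (hF : constantCoeff F = 1) {k : ℕ} (hk : 0 < k)
    (hper : Mop^[k] F = F) (d p : ℕ) : -1 ≤ (logCoeffAtInfty F p d).orderTop := by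
  induction d using Nat.strong_induction_on generalizing p with
  | _ d ih =>
    rcases Nat.eq_zero_or_pos d with rfl | hd
    · simp [logCoeffAtInfty_zero]
    · have hu : Function.Periodic (fun p => logCoeffAtInfty F p d) k := fun p => by
        simp only [logCoeffAtInfty, Function.iterate_add_apply, hper]
      exact LaurentSeries.neg_one_le_orderTop_of_periodic (u := fun p => logCoeffAtInfty F p d)
        hk hu (Nat.cast_ne_zero.mpr hd.ne') (orderTop_logCoeffAtInfty_succ_sub hF ih) p

theorem coeff_neg_one_logCoeffAtInfty (hF : constantCoeff F = 1)
    (hbound : ∀ d p, -1 ≤ (logCoeffAtInfty F p d).orderTop) (p d : ℕ) :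
    (logCoeffAtInfty F p d).coeff (-1) = (logCoeffAtInfty F 0 d).coeff (-1) := by
  induction p with
  | zero => rfl
  | succ p ih =>
    have hlow : ((-1 - 1 : ℤ) : WithTop ℤ) < (logCoeffAtInfty F p d).orderTop :=
      (by decide : ((-1 - 1 : ℤ) : WithTop ℤ) < -1).trans_le (hbound d p)
    rw [LaurentSeries.coeff_eq_of_orderTop_sub_nonneg
      (orderTop_logCoeffAtInfty_succ_sub hF (fun e _ => hbound e) p) (by norm_num),
      HahnSeries.coeff_eq_zero_of_lt_orderTop hlow, mul_zero, add_zero, ih]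

end LogCoeffAtInfty

theorem log_MpF_regularity_general (F : PowerSeries (RatFunc ℚ)) (k : ℕ) (hk : 0 < k)
    (hF1 : PowerSeries.coeff 0 F = 1)
    (hper : Mop^[k] F = F) :
    (∀ p d : ℕ,
        (PowerSeries.coeff d (logPS (Mop^[p] F))).num.natDegree
          ≤ (PowerSeries.coeff d (logPS (Mop^[p] F))).denom.natDegree + 1) ∧
    (∀ p d : ℕ,
        res0 (invSubst (PowerSeries.coeff d (logPS (Mop^[p] F))))
          = res0 (invSubst (PowerSeries.coeff d (logPS F)))) := by
  have hF : constantCoeff F = 1 := by rwa [← coeff_zero_eq_constantCoeff_apply]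
  have hbound := neg_one_le_orderTop_logCoeffAtInfty hF hk hper
  refine ⟨fun p d => RatFunc.natDegree_num_le_of_le_orderTop (hbound d p), fun p d => ?_⟩
  rw [res0, res0, coe_invSubst, coe_invSubst]
  exact coeff_neg_one_logCoeffAtInfty hF hbound p d

/-- Lemma `reg_lmm`; Lemma 1.3 of Zagier–Zinger. If `F ∈ P` satisfies
`M^k F = F` for some `k > 0`, then every coefficient of `log(M^p F)(w,q)` is `O(w)` as
`w → ∞` (degree of numerator at most one more than degree of denominator), and the
residue at `w = 0` of `log(M^p F)(w^{−1},q)`, taken coefficientwise in `q`, is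
independent of `p`. -/
theorem log_MpF_regularity (F : PowerSeries (RatFunc ℚ)) (k : ℕ) (hk : 0 < k)
    (hF1 : PowerSeries.coeff 0 F = 1)
    (hFhol : ∀ d, ((PowerSeries.coeff d F).denom.eval 0) ≠ 0)
    (hper : Mop^[k] F = F) :
    (∀ p d : ℕ,
        (PowerSeries.coeff d (logPS (Mop^[p] F))).num.natDegree
          ≤ (PowerSeries.coeff d (logPS (Mop^[p] F))).denom.natDegree + 1) ∧
    (∀ p d : ℕ,
        res0 (invSubst (PowerSeries.coeff d (logPS (Mop^[p] F))))
          = res0 (invSubst (PowerSeries.coeff d (logPS F)))) :=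
  log_MpF_regularity_general F k hk hF1 hper
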